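/- arXiv:2312.06944 — 2 statements merged into one kernel-verified Lean document; each statement's English description precedes it below -/
import Mathlib

section
/- Let H be a cuboid hypermatrix over ℂ of order N and side length n, and let A_1, ..., A_N be complex n×n matrices each of determinant 1 (i.e. A_k ∈ SL(n,ℂ)). Then hdet((A_1,...,A_N)*H) = hdet(H). -/
open Finset

/-- Determinant of a matrix with columns selected by a non-injective map is zero. -/
lemma det_submatrix_eq_zero {n : ℕ} (M : Matrix (Fin n) (Fin n) ℂ) (f : Fin n → Fin n)
    (hf : ¬ Function.Injective f) : (M.submatrix id f).det = 0 := by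
  simp only [Function.Injective, not_forall] at hf
  obtain ⟨i, j, hfij, hij⟩ := hf
  exact Matrix.det_zero_of_column_eq hij (fun k => by simp [Matrix.submatrix, hfij])

lemma det_sum {n : ℕ} (M : Matrix (Fin n) (Fin n) ℂ) (f : Fin n → Fin n) :
    ∑ τ : Equiv.Perm (Fin n), ((Equiv.Perm.sign τ : ℤ) : ℂ) * ∏ k, M (τ k) (f k)
      = (M.submatrix id f).det := by
  rw [Matrix.det_apply']
  rfl



/-- The combinatorial hyperdeterminant of a cuboid hypermatrix of order `N`
and side length `n` over `ℂ`:
`hdet H = (1/n!) Σ_{σ_1,...,σ_N ∈ S_n} sgn(σ_1)⋯sgn(σ_N) ∏_{k=1}^n H_{σ_1(k)...σ_N(k)}`. -/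
noncomputable def hdet (N n : ℕ) (H : (Fin N → Fin n) → ℂ) : ℂ :=
  (1 / (Nat.factorial n) : ℂ) *
    ∑ σ : Fin N → Equiv.Perm (Fin n),
      (∏ a, ((Equiv.Perm.sign (σ a) : ℤ) : ℂ)) * ∏ k, H (fun a => σ a k)

/-- Multilinear multiplication of the tuple of `n×n` matrices `(A_1,...,A_N)`
with a cuboid hypermatrix `H` of order `N` and side length `n`. -/
noncomputable def mmulSq (N n : ℕ) (A : Fin N → Matrix (Fin n) (Fin n) ℂ)
    (H : (Fin N → Fin n) → ℂ) : (Fin N → Fin n) → ℂ :=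
  fun i => ∑ j : Fin N → Fin n, (∏ a, A a (i a) (j a)) * H j

/-- For `A_1,...,A_N ∈ SL(n,ℂ)`, `hdet((A_1,...,A_N)*H) = hdet(H)`. -/
theorem hdet_mmul_sl (N n : ℕ) (H : (Fin N → Fin n) → ℂ)
    (A : Fin N → Matrix (Fin n) (Fin n) ℂ) (hA : ∀ a, (A a).det = 1) :
    hdet N n (mmulSq N n A H) = hdet N n H := by
  unfold hdet mmulSq
  congr 1

  -- Step 1: expand the product of sums
  have step1 : ∀ σ : Fin N → Equiv.Perm (Fin n),
      (∏ k, ∑ j : Fin N → Fin n, (∏ a, A a (σ a k) (j a)) * H j)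
        = ∑ J : Fin n → (Fin N → Fin n), ∏ k, (∏ a, A a (σ a k) (J k a)) * H (J k) := by
    intro σ
    exact Fintype.prod_sum _
  simp only [step1, Finset.mul_sum]
  rw [Finset.sum_comm]
  -- reindex J by its swap f
  have swapEq : (∑ J : Fin n → (Fin N → Fin n), ∑ σ : Fin N → Equiv.Perm (Fin n),
        (∏ a, ((Equiv.Perm.sign (σ a) : ℤ) : ℂ)) * ∏ k, (∏ a, A a (σ a k) (J k a)) * H (J k))
      = ∑ f : Fin N → (Fin n → Fin n), ∑ σ : Fin N → Equiv.Perm (Fin n),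
        (∏ a, ((Equiv.Perm.sign (σ a) : ℤ) : ℂ)) *
          ∏ k, (∏ a, A a (σ a k) (f a k)) * H (fun a => f a k) :=
    Fintype.sum_equiv (Equiv.piComm (fun (_ : Fin n) (_ : Fin N) => Fin n)) _ _ (fun J => rfl)
  rw [swapEq]
  -- Step 2: per f, pull out H-product and factorize σ-sum into a product of determinants
  have step2 : ∀ f : Fin N → (Fin n → Fin n),
      (∑ σ : Fin N → Equiv.Perm (Fin n),
        (∏ a, ((Equiv.Perm.sign (σ a) : ℤ) : ℂ)) *
          ∏ k, (∏ a, A a (σ a k) (f a k)) * H (fun a => f a k))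
      = (∏ k, H (fun a => f a k)) * ∏ a, ((A a).submatrix id (f a)).det := by
    intro f
    have : ∀ σ : Fin N → Equiv.Perm (Fin n),
        (∏ a, ((Equiv.Perm.sign (σ a) : ℤ) : ℂ)) *
          ∏ k, (∏ a, A a (σ a k) (f a k)) * H (fun a => f a k)
        = (∏ k, H (fun a => f a k)) *
            ∏ a, (((Equiv.Perm.sign (σ a) : ℤ) : ℂ) * ∏ k, A a (σ a k) (f a k)) := by
      intro σ
      rw [Finset.prod_mul_distrib, Finset.prod_mul_distrib, Finset.prod_comm]
      ring
    simp only [this, ← Finset.mul_sum]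
    congr 1
    rw [← Fintype.prod_sum (fun a τ => ((Equiv.Perm.sign τ : ℤ) : ℂ) * ∏ k, A a (τ k) (f a k))]
    exact Finset.prod_congr rfl fun a _ => det_sum (A a) (f a)
  simp only [step2]
  -- Step 3: restrict to bijective selections, i.e. permutations
  set g : (Fin N → Fin n → Fin n) → ℂ := fun f =>
    (∏ k, H fun a => f a k) * ∏ a, ((A a).submatrix id (f a)).det with hg
  set φ : (Fin N → Equiv.Perm (Fin n)) → (Fin N → Fin n → Fin n) := fun σ a => ⇑(σ a) with hφ
  have hzero : ∀ f ∈ Finset.univ, f ∉ Finset.univ.image φ → g f = 0 := by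
    intro f _ hf
    by_cases hbij : ∀ a, Function.Injective (f a)
    · exact absurd (Finset.mem_image.2 ⟨fun a => Equiv.ofBijective (f a)
        ((Finite.injective_iff_bijective).1 (hbij a)), Finset.mem_univ _, rfl⟩) hf
    · push_neg at hbij
      obtain ⟨a, ha⟩ := hbij
      rw [hg]
      simp only
      rw [Finset.prod_eq_zero (Finset.mem_univ a) (det_submatrix_eq_zero (A a) (f a) ha),
        mul_zero]
  rw [← Finset.sum_subset (Finset.subset_univ (Finset.univ.image φ)) hzero,
    Finset.sum_image (fun σ _ τ _ h => funext fun a =>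
      Equiv.coe_fn_injective (congrFun h a))]
  refine Finset.sum_congr rfl fun σ _ => ?_
  rw [hg]
  simp only [hφ]
  have : ∀ a, ((A a).submatrix id ⇑(σ a)).det = ((Equiv.Perm.sign (σ a) : ℤ) : ℂ) := by
    intro a
    rw [Matrix.det_permute', hA a, mul_one]
  simp only [this]
  exact mul_comm _ _
end

section
/- For every n ≥ 1, the matrix Ê_n of the quadratic form given by the combinatorial hyperdeterminant of a 2n-qubit hypermatrix — i.e. the symmetric matrix Ê_n ∈ ℂ^{4^n × 4^n} satisfying |ψ⟩^T Ê_n |ψ⟩ = hdet(ψ̂) for every ψ : {0,1}^{2n} → ℂ — is a symmetric anti-diagonal matrix: using 0-based indices, (Ê_n)_{j,k} = 0 unless j + k = 4^n − 1, and (Ê_n)_{j, 4^n−1−j} = (1/2)(−1)^{w(j)}, where w(j) is the binary weight of j. In particular, all of its nonzero entries are ±1/2. -/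
/-!
A term of `hdet ψ` is determined by the index `i = (σ_k(0))_k`, which has `i₁ = 0`: its second
factor is `ψ` at the bitwise complement `ī`, and its sign is `(−1)^{|i|}`. Complementing exchanges
the indices with `i₁ = 0` and those with `i₁ = 1` and, for an even number of qubits, preserves
`(−1)^{|i|}`, so `2 hdet ψ = Σ_i (−1)^{|i|} ψ_i ψ_ī`. In the vectorization the complement of the
index `j` is `4ⁿ − 1 − j` and `|i| = w(j)`, so this is the quadratic form of the anti-diagonal
matrix with entries `½ (−1)^{w(j)}`. That matrix is symmetric, and by polarization a symmetric
matrix over `ℂ` is determined by its quadratic form.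
-/

/-- The `k`-th bit (big-endian, `0`-based) of an index `j`, so that for `j < 2^n`,
`j = Σ_k (bit j k) · 2^{n-1-k}` (lexicographic order of bit strings). -/
def qbit (n : ℕ) (j : ℕ) (k : Fin n) : Fin 2 :=
  ⟨j / 2 ^ (n - 1 - (k : ℕ)) % 2, by omega⟩

/-- The vectorization `|ψ⟩ ∈ ℂ^{4^n}` of a `2n`-qubit hypermatrix, listing the entries in
lexicographic order of the binary index `j = Σ_k i_k 2^{2n−k}`. -/
noncomputable def vecQ (n : ℕ) (ψ : (Fin (2 * n) → Fin 2) → ℂ) : Fin (4 ^ n) → ℂ :=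
  fun j => ψ (qbit (2 * n) (j : ℕ))

/-- The combinatorial hyperdeterminant of an order-`N` side-2 hypermatrix:
`hdet H = Σ_{σ_2,...,σ_N ∈ S_2} (−1)^m H_{0σ_2(0)...σ_N(0)} H_{1σ_2(1)...σ_N(1)}`,
where `m` is the number of the permutations `σ_2,...,σ_N` that are transpositions. -/
noncomputable def hdetQ (N : ℕ) (hN : 0 < N) (H : (Fin N → Fin 2) → ℂ) : ℂ :=
  ∑ σ : Fin N → Equiv.Perm (Fin 2),
    if σ ⟨0, hN⟩ = 1 then
      (∏ k, ((Equiv.Perm.sign (σ k) : ℤ) : ℂ)) *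
        (H (fun k => σ k 0) * H (fun k => σ k 1))
    else 0

/-- The binary weight `w(j)`: the number of 1's in the binary expansion of `j`. -/
def binWeight (j : ℕ) : ℕ := (Nat.digits 2 j).count 1

open Matrix

theorem Matrix.IsSymm.eq_zero_of_dotProduct_mulVec_self {n R : Type*} [Fintype n] [DecidableEq n]
    [CommRing R] [Invertible (2 : R)] {A : Matrix n n R} (hA : A.IsSymm)
    (h : ∀ v, v ⬝ᵥ A *ᵥ v = 0) : A = 0 := by
  have bilin : ∀ j k, Pi.single j 1 ⬝ᵥ A *ᵥ Pi.single k 1 = A j k := by simp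
  ext j k
  have hjj := bilin j j ▸ h (Pi.single j 1)
  have hkk := bilin k k ▸ h (Pi.single k 1)
  have hjk := h (Pi.single j 1 + Pi.single k 1)
  simp only [mulVec_add, add_dotProduct, dotProduct_add, bilin, hjj, hkk, hA.apply j k,
    zero_add, add_zero, ← two_mul] at hjk
  exact (isUnit_of_invertible (2 : R)).mul_right_eq_zero.mp hjk

theorem Matrix.IsSymm.eq_of_dotProduct_mulVec_self_eq {n R : Type*} [Fintype n] [DecidableEq n]
    [CommRing R] [Invertible (2 : R)] {A B : Matrix n n R} (hA : A.IsSymm) (hB : B.IsSymm)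
    (h : ∀ v, v ⬝ᵥ A *ᵥ v = v ⬝ᵥ B *ᵥ v) : A = B :=
  sub_eq_zero.mp <| (hA.sub hB).eq_zero_of_dotProduct_mulVec_self fun v => by
    rw [sub_mulVec, dotProduct_sub, h, sub_self]

theorem finFunctionFinEquiv_rev_comp {m n : ℕ} (f : Fin n → Fin m) :
    finFunctionFinEquiv (Fin.rev ∘ f) = (finFunctionFinEquiv f).rev := by
  obtain _ | m := m
  · cases n with
    | zero => exact (finCongr (pow_zero 0)).injective (Subsingleton.elim _ _)
    | succ n => exact (f 0).elim0
  have hsum : ∑ i, (Fin.rev (f i) : ℕ) * (m + 1) ^ (i : ℕ) +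
      ∑ i, (f i : ℕ) * (m + 1) ^ (i : ℕ) + 1 = (m + 1) ^ n := by
    have hterm : ∀ i, (Fin.rev (f i) : ℕ) * (m + 1) ^ (i : ℕ) + (f i : ℕ) * (m + 1) ^ (i : ℕ)
        = (m + 1) ^ (i : ℕ) * m := fun i => by
      rw [← add_mul, Fin.val_rev, mul_comm]; congr 1; omega
    rw [← Finset.sum_add_distrib, Finset.sum_congr rfl fun i _ => hterm i, ← Finset.sum_mul,
      Fin.sum_univ_eq_sum_range (fun i => (m + 1) ^ i), geom_sum_mul_add]
  ext
  simp only [Function.comp_apply, finFunctionFinEquiv_apply, Fin.val_rev] at hsum ⊢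
  omega

theorem qbit_eq_finFunctionFinEquiv_symm {N j : ℕ} (hj : j < 2 ^ N) :
    qbit N j = finFunctionFinEquiv.symm ⟨j, hj⟩ ∘ Fin.rev := by
  funext k
  ext
  simp only [qbit, Function.comp_apply, finFunctionFinEquiv_symm_apply_val, Fin.val_rev]
  congr 3
  omega

def qbitEquiv {M N : ℕ} (hM : M = 2 ^ N) : Fin M ≃ (Fin N → Fin 2) :=
  (finCongr hM).trans (finFunctionFinEquiv.symm.trans (Equiv.arrowCongr Fin.revPerm (Equiv.refl _)))

theorem qbitEquiv_apply {M N : ℕ} (hM : M = 2 ^ N) (j : Fin M) : qbitEquiv hM j = qbit N j := by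
  rw [qbit_eq_finFunctionFinEquiv_symm (hM ▸ j.isLt)]
  rfl

theorem qbit_rev {M N : ℕ} (hM : M = 2 ^ N) (j : Fin M) : qbit N j.rev = Fin.rev ∘ qbit N j := by
  subst hM
  rw [qbit_eq_finFunctionFinEquiv_symm j.rev.isLt, qbit_eq_finFunctionFinEquiv_symm j.isLt,
    ← Function.comp_assoc]
  congr 1
  rw [Equiv.symm_apply_eq, finFunctionFinEquiv_rev_comp]
  simp only [Fin.eta, Equiv.apply_symm_apply]

theorem binWeight_eq_mod_two_add (j : ℕ) : binWeight j = j % 2 + binWeight (j / 2) := by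
  rcases Nat.eq_zero_or_pos j with rfl | hj
  · rfl
  · rw [binWeight, Nat.digits_eq_cons_digits_div (by norm_num) hj.ne', List.count_cons]
    rcases Nat.mod_two_eq_zero_or_one j with h | h <;> simp [h, binWeight, add_comm]

theorem binWeight_eq_sum_finFunctionFinEquiv_symm {N : ℕ} (a : Fin (2 ^ N)) :
    binWeight a = ∑ i, (finFunctionFinEquiv.symm a i : ℕ) := by
  induction N with
  | zero => simp [binWeight]
  | succ N ih =>
    have ha : (a : ℕ) / 2 < 2 ^ N := Nat.div_lt_of_lt_mul (a.isLt.trans_eq (pow_succ' 2 N))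
    rw [binWeight_eq_mod_two_add, ih ⟨a / 2, ha⟩, Fin.sum_univ_succ]
    simp [finFunctionFinEquiv_symm_apply_val, Nat.div_div_eq_div_mul, pow_succ']

def bitWeight {N : ℕ} (i : Fin N → Fin 2) : ℕ := ∑ k, (i k : ℕ)

theorem bitWeight_qbit {N j : ℕ} (hj : j < 2 ^ N) : bitWeight (qbit N j) = binWeight j := by
  rw [bitWeight, qbit_eq_finFunctionFinEquiv_symm hj,
    binWeight_eq_sum_finFunctionFinEquiv_symm ⟨j, hj⟩]
  exact Equiv.sum_comp Fin.revPerm (fun k => (finFunctionFinEquiv.symm ⟨j, hj⟩ k : ℕ))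

theorem bitWeight_rev_comp_add {N : ℕ} (i : Fin N → Fin 2) :
    bitWeight (Fin.rev ∘ i) + bitWeight i = N := by
  rw [bitWeight, bitWeight, ← Finset.sum_add_distrib]
  calc ∑ k, ((Fin.rev (i k) : ℕ) + i k) = ∑ _k : Fin N, 1 :=
        Finset.sum_congr rfl fun k _ => by rw [Fin.val_rev]; omega
    _ = N := by simp

theorem neg_one_pow_bitWeight_rev_comp {R : Type*} [Ring R] {N : ℕ} (hN : Even N)
    (i : Fin N → Fin 2) : (-1 : R) ^ bitWeight (Fin.rev ∘ i) = (-1) ^ bitWeight i := by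
  have := bitWeight_rev_comp_add i
  have hmod : bitWeight (Fin.rev ∘ i) % 2 = bitWeight i % 2 := by
    obtain ⟨k, rfl⟩ := hN; omega
  rw [neg_one_pow_eq_pow_mod_two, hmod, ← neg_one_pow_eq_pow_mod_two]

theorem Fintype.sum_eq_two_nsmul_sum_ite {α M : Type*} [Fintype α] [AddCommMonoid M]
    (e : α ≃ α) (p : α → Prop) [DecidablePred p] (hp : ∀ x, p (e x) ↔ ¬p x) {f : α → M}
    (hf : ∀ x, f (e x) = f x) : ∑ x, f x = 2 • ∑ x, if p x then f x else 0 := by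
  have hsplit : ∀ x, f x = (if p x then f x else 0) + if ¬p x then f x else 0 := fun x => by
    by_cases hx : p x <;> simp [hx]
  have hcompl : ∑ x, (if ¬p x then f x else 0) = ∑ x, if p x then f x else 0 := by
    rw [← e.sum_comp]
    simp only [hp, hf, not_not]
  rw [Finset.sum_congr rfl fun x _ => hsplit x, Finset.sum_add_distrib, hcompl, two_nsmul]

noncomputable def permFinTwoEquiv : Equiv.Perm (Fin 2) ≃ Fin 2 :=
  Equiv.ofBijective (fun σ => σ 0) (by decide)

theorem hdetQ_eq_sum_ite {N : ℕ} (hN : 0 < N) (H : (Fin N → Fin 2) → ℂ) :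
    hdetQ N hN H =
      ∑ i, if i ⟨0, hN⟩ = 0 then (-1) ^ bitWeight i * (H i * H (Fin.rev ∘ i)) else 0 := by
  have hid : ∀ σ : Equiv.Perm (Fin 2), σ = 1 ↔ σ 0 = 0 := by decide
  have happly_one : ∀ σ : Equiv.Perm (Fin 2), σ 1 = (σ 0).rev := by decide
  have hsign : ∀ σ : Equiv.Perm (Fin 2), (Equiv.Perm.sign σ : ℤ) = (-1) ^ (σ 0 : ℕ) := by decide
  refine Fintype.sum_equiv (Equiv.piCongrRight fun _ => permFinTwoEquiv) _ _ fun σ => ?_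
  simp only [hid, happly_one, hsign, bitWeight, Function.comp_def]
  push_cast
  rw [Finset.prod_pow_eq_pow_sum]
  rfl

theorem two_mul_hdetQ {N : ℕ} (hN : 0 < N) (hEven : Even N) (H : (Fin N → Fin 2) → ℂ) :
    2 * hdetQ N hN H = ∑ i, (-1) ^ bitWeight i * (H i * H (Fin.rev ∘ i)) := by
  have hrev : ∀ x : Fin 2, x.rev = 0 ↔ ¬x = 0 := by decide
  have hinv : ∀ i : Fin N → Fin 2,
      (-1) ^ bitWeight (Fin.rev ∘ i) * (H (Fin.rev ∘ i) * H (Fin.rev ∘ Fin.rev ∘ i)) =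
        (-1) ^ bitWeight i * (H i * H (Fin.rev ∘ i)) := by
    intro i
    rw [← Function.comp_assoc, Fin.rev_involutive.comp_self, Function.id_comp,
      neg_one_pow_bitWeight_rev_comp hEven, mul_comm (H (Fin.rev ∘ i))]
  rw [hdetQ_eq_sum_ite, Fintype.sum_eq_two_nsmul_sum_ite (Equiv.piCongrRight fun _ => Fin.revPerm)
    (fun i : Fin N → Fin 2 => i ⟨0, hN⟩ = 0) (fun i => hrev (i ⟨0, hN⟩))
    (f := fun i => (-1) ^ bitWeight i * (H i * H (Fin.rev ∘ i))) hinv, two_nsmul, two_mul]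

noncomputable def hdetMatrix (n : ℕ) : Matrix (Fin (4 ^ n)) (Fin (4 ^ n)) ℂ :=
  (diagonal fun j : Fin (4 ^ n) => 1 / 2 * (-1) ^ binWeight j).submatrix id Fin.revPerm

theorem four_pow_eq_two_pow (n : ℕ) : 4 ^ n = 2 ^ (2 * n) := by
  rw [pow_mul]; norm_num

theorem neg_one_pow_binWeight_rev (n : ℕ) (j : Fin (4 ^ n)) :
    (-1 : ℂ) ^ binWeight j.rev = (-1) ^ binWeight j := by
  have hM := four_pow_eq_two_pow n
  rw [← bitWeight_qbit (j.rev.isLt.trans_eq hM), ← bitWeight_qbit (j.isLt.trans_eq hM),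
    qbit_rev hM, neg_one_pow_bitWeight_rev_comp (even_two_mul n)]

theorem hdetMatrix_apply (n : ℕ) (j k : Fin (4 ^ n)) :
    hdetMatrix n j k = if j = k.rev then 1 / 2 * (-1) ^ binWeight j else 0 := by
  simp only [hdetMatrix, submatrix_apply, diagonal_apply, id, Fin.revPerm_apply]

theorem hdetMatrix_isSymm (n : ℕ) : (hdetMatrix n).IsSymm := by
  ext j k
  rw [transpose_apply, hdetMatrix_apply, hdetMatrix_apply]
  by_cases hkj : k = j.rev
  · rw [if_pos hkj, if_pos (Fin.rev_eq_iff.mp hkj.symm), hkj, neg_one_pow_binWeight_rev]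
  · have hjk : j ≠ k.rev := fun h => hkj (Fin.rev_eq_iff.mpr h).symm
    rw [if_neg hkj, if_neg hjk]

theorem vecQ_surjective (n : ℕ) : Function.Surjective (vecQ n) := fun v =>
  ⟨v ∘ (qbitEquiv (four_pow_eq_two_pow n)).symm, funext fun j => by
    simp only [vecQ, Function.comp_apply, ← qbitEquiv_apply (four_pow_eq_two_pow n),
      Equiv.symm_apply_apply]⟩

theorem dotProduct_vecQ_hdetMatrix_mulVec (n : ℕ) (hn : 0 < 2 * n)
    (ψ : (Fin (2 * n) → Fin 2) → ℂ) :
    vecQ n ψ ⬝ᵥ hdetMatrix n *ᵥ vecQ n ψ = hdetQ (2 * n) hn ψ := by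
  have hM := four_pow_eq_two_pow n
  calc vecQ n ψ ⬝ᵥ hdetMatrix n *ᵥ vecQ n ψ
      = 2⁻¹ * ∑ j, (fun i => (-1) ^ bitWeight i * (ψ i * ψ (Fin.rev ∘ i))) (qbitEquiv hM j) := by
        rw [hdetMatrix, submatrix_mulVec_equiv, dotProduct, Finset.mul_sum]
        refine Finset.sum_congr rfl fun j _ => ?_
        simp only [vecQ, qbitEquiv_apply, Function.comp_apply, mulVec_diagonal, Fin.revPerm_symm,
          Fin.revPerm_apply, id, qbit_rev hM, bitWeight_qbit (j.isLt.trans_eq hM)]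
        ring
    _ = hdetQ (2 * n) hn ψ := by
        rw [Equiv.sum_comp (qbitEquiv hM) (fun i => (-1) ^ bitWeight i * (ψ i * ψ (Fin.rev ∘ i))),
          ← two_mul_hdetQ hn (even_two_mul n), inv_mul_cancel_left₀ two_ne_zero]

/-- For `n ≥ 1`, the symmetric matrix `Ê_n` of the quadratic form given by the combinatorial
hyperdeterminant of a `2n`-qubit hypermatrix (i.e. `|ψ⟩ᵀ Ê_n |ψ⟩ = hdet(ψ̂)` for all `ψ`)
is a symmetric anti-diagonal matrix with `(Ê_n)_{j,4^n−1−j} = (1/2)(−1)^{w(j)}`;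
in particular all its nonzero entries are `±1/2`. -/
theorem ent_matrix_antidiag (n : ℕ) (hn : 1 ≤ n)
    (E : Matrix (Fin (4 ^ n)) (Fin (4 ^ n)) ℂ) (hsymm : E.IsSymm)
    (hquad : ∀ ψ : (Fin (2 * n) → Fin 2) → ℂ,
      dotProduct (vecQ n ψ) (E.mulVec (vecQ n ψ)) = hdetQ (2 * n) (by omega) ψ) :
    (∀ j k : Fin (4 ^ n), (j : ℕ) + (k : ℕ) ≠ 4 ^ n - 1 → E j k = 0) ∧
      ∀ j : Fin (4 ^ n),
        E j ⟨4 ^ n - 1 - (j : ℕ), by have := j.isLt; omega⟩ =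
          (1 / 2 : ℂ) * (-1) ^ binWeight (j : ℕ) := by
  obtain rfl : E = hdetMatrix n := hsymm.eq_of_dotProduct_mulVec_self_eq (hdetMatrix_isSymm n)
    fun v => by
      obtain ⟨ψ, rfl⟩ := vecQ_surjective n v
      rw [hquad, dotProduct_vecQ_hdetMatrix_mulVec]
  refine ⟨fun j k hjk => ?_, fun j => ?_⟩
  · have hj : j ≠ k.rev := fun h => hjk (by rw [h, Fin.val_rev]; omega)
    rw [hdetMatrix_apply, if_neg hj]
  · have hrev : (⟨4 ^ n - 1 - j, by omega⟩ : Fin (4 ^ n)) = j.rev := by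
      ext
      simp only [Fin.val_rev]
      omega
    rw [hrev, hdetMatrix_apply, if_pos j.rev_rev.symm]
end
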